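/- Let G be a group with finite symmetric generating set X whose geodesics are k-locally excluding, let w be a geodesic word over X with l(w) ≥ 3k-3, written w = u'uv' with l(u') = l(v') = k-1, and let a, b be elements of G of word length at most 1 such that both aw and wb have geodesic length l(w). Then there exist words y, z over X of length k-1 with a w b =_G y u z; consequently, if a w b has geodesic length strictly less than l(w), then already one of aw, wb has geodesic length less than l(w). -/

import Mathlib

/-- The minimal length of a word over `X` representing `g` (the geodesic length `l_G`). -/
noncomputable def lG {G : Type*} [Group G] (X : Set G) (g : G) : ℕ :=
  sInf {n | ∃ w : List G, (∀ x ∈ w, x ∈ X) ∧ w.prod = g ∧ w.length = n}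

/-- `w` is a geodesic word over `X`. -/
def Geodesic {G : Type*} [Group G] (X : Set G) (w : List G) : Prop :=
  (∀ x ∈ w, x ∈ X) ∧ w.length = lG X w.prod

/-- `w` is a `k`-local geodesic over `X`: every subword (contiguous factor) of length
at most `k` is geodesic. -/
def LocalGeodesic {G : Type*} [Group G] (X : Set G) (k : ℕ) (w : List G) : Prop :=
  (∀ x ∈ w, x ∈ X) ∧ ∀ u : List G, u <:+: w → u.length ≤ k → Geodesic X u

/-- A language `L` of words over `X` is `k`-locally excluding: membership (among words
over `X`) is equivalent to avoiding a fixed finite set of forbidden subwords of length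
at most `k`. -/
def LocallyExcluding {G : Type*} [Group G] (X : Set G) (k : ℕ) (L : Set (List G)) : Prop :=
  ∃ F : Set (List G), F.Finite ∧ (∀ f ∈ F, f.length ≤ k) ∧
    ∀ w : List G, (∀ x ∈ w, x ∈ X) → (w ∈ L ↔ ∀ f ∈ F, ¬ f <:+: w)

/-- One step of rewriting with the set of rules `R` (replace a subword `p.1` by `p.2`). -/
def Rewrite {G : Type*} (R : Set (List G × List G)) (w w' : List G) : Prop :=
  ∃ p ∈ R, ∃ l r : List G, w = l ++ p.1 ++ r ∧ w' = l ++ p.2 ++ r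

/-!
Since every forbidden subword has length at most `k`, two geodesics `p m` and `m q` overlapping
in a word `m` of length at least `k - 1` glue to a geodesic `p m q`: each short subword of
`p m q` lies in one of them. Write `a` as a word `c` of length at most one. If `c u'` were
geodesic, gluing it to `w = u' (u v')` along `u'` would give a geodesic `c w` for `a w`, forcing
`c = []`; so `l_G(a u') ≤ k - 1`. A geodesic `y` for `a u'` then has length exactly `k - 1`,
because `y u v'` represents `a w` of geodesic length `l(w)`, and `y u v'` is geodesic.
Symmetrically `v' b` is represented by `z` with `u' u z` geodesic, and gluing `y u v'` and
`u' u z` along `u` shows that `y u z` is geodesic of length `l(w)`.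
-/

namespace List

theorem IsInfix.infix_left_or_infix_right {α : Type*} {f l₁ l₂ l₃ : List α}
    (h : f <:+: l₁ ++ l₂ ++ l₃) (hf : f.length ≤ l₂.length + 1) :
    f <:+: l₁ ++ l₂ ∨ f <:+: l₂ ++ l₃ := by
  obtain ⟨s, t, hst⟩ := h
  have hlen := congrArg length hst
  simp only [length_append] at hlen
  by_cases hleft : s.length + f.length ≤ l₁.length + l₂.length
  · obtain ⟨t', ht'⟩ : s ++ f <+: l₁ ++ l₂ :=
      prefix_of_prefix_length_le ⟨t, hst⟩ ⟨l₃, rfl⟩ (by simpa using hleft)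
    exact Or.inl ⟨s, t', ht'⟩
  · obtain ⟨s', rfl⟩ : l₁ <+: s :=
      prefix_of_prefix_length_le ⟨l₂ ++ l₃, (append_assoc ..).symm⟩ ⟨f ++ t, by simpa using hst⟩
        (by omega)
    exact Or.inr ⟨s', t, by simpa using hst⟩

end List

section Words

variable {G : Type*} [Group G] {X : Set G}

theorem lG_le_length {w : List G} (hw : ∀ x ∈ w, x ∈ X) : lG X w.prod ≤ w.length :=
  Nat.sInf_le ⟨w, hw, rfl, rfl⟩

theorem geodesic_of_length_le {w : List G} (hw : ∀ x ∈ w, x ∈ X)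
    (h : w.length ≤ lG X w.prod) : Geodesic X w :=
  ⟨hw, le_antisymm h (lG_le_length hw)⟩

theorem exists_geodesic_prod_eq {w : List G} (hw : ∀ x ∈ w, x ∈ X) :
    ∃ v, Geodesic X v ∧ v.prod = w.prod := by
  obtain ⟨v, hvX, hv, hlen⟩ := Nat.sInf_mem (⟨w.length, w, hw, rfl, rfl⟩ :
    {n | ∃ v : List G, (∀ x ∈ v, x ∈ X) ∧ v.prod = w.prod ∧ v.length = n}.Nonempty)
  exact ⟨v, ⟨hvX, by rw [hlen, hv]; rfl⟩, hv⟩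

theorem exists_word_prod_eq (hsym : ∀ x ∈ X, x⁻¹ ∈ X) (hgen : Subgroup.closure X = ⊤) (g : G) :
    ∃ w : List G, (∀ x ∈ w, x ∈ X) ∧ w.prod = g := by
  have hX : X ∪ X⁻¹ = X := Set.union_eq_self_of_subset_right fun x hx => by simpa using hsym _ hx
  have hg : g ∈ (Subgroup.closure X).toSubmonoid := by rw [hgen]; trivial
  rw [Subgroup.closure_toSubmonoid, hX] at hg
  exact Submonoid.exists_list_of_mem_closure hg

theorem exists_geodesic_of_closure_eq_top (hsym : ∀ x ∈ X, x⁻¹ ∈ X)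
    (hgen : Subgroup.closure X = ⊤) (g : G) : ∃ w, Geodesic X w ∧ w.prod = g := by
  obtain ⟨w, hw, rfl⟩ := exists_word_prod_eq hsym hgen g
  exact exists_geodesic_prod_eq hw

theorem Geodesic.of_infix {v w : List G} (hw : Geodesic X w) (hvw : v <:+: w) :
    Geodesic X v := by
  obtain ⟨s, t, rfl⟩ := hvw
  have hX := hw.1
  simp only [List.forall_mem_append] at hX
  obtain ⟨⟨hsX, hvX⟩, htX⟩ := hX
  refine geodesic_of_length_le hvX (not_lt.mp fun hlt => ?_)
  obtain ⟨v₀, hv₀, hprod⟩ := exists_geodesic_prod_eq hvX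
  have hshort : lG X (s ++ v₀ ++ t).prod ≤ (s ++ v₀ ++ t).length :=
    lG_le_length (List.forall_mem_append.mpr ⟨List.forall_mem_append.mpr ⟨hsX, hv₀.1⟩, htX⟩)
  have hv₀len : v₀.length = lG X v.prod := hprod ▸ hv₀.2
  have hlen := hw.2
  simp only [List.prod_append, List.length_append, hprod] at hshort hlen
  omega

theorem exists_geodesic_replacement {l s r : List G} (hX : ∀ x ∈ l ++ s ++ r, x ∈ X) {n : ℕ}
    (hs : lG X s.prod ≤ n) (hlsr : l.length + n + r.length ≤ lG X (l ++ s ++ r).prod) :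
    ∃ y : List G, y.length = n ∧ y.prod = s.prod ∧ Geodesic X (l ++ y ++ r) := by
  simp only [List.forall_mem_append] at hX
  obtain ⟨⟨hlX, hsX⟩, hrX⟩ := hX
  obtain ⟨y, hy, hyprod⟩ := exists_geodesic_prod_eq hsX
  have hyX : ∀ x ∈ l ++ y ++ r, x ∈ X :=
    List.forall_mem_append.mpr ⟨List.forall_mem_append.mpr ⟨hlX, hy.1⟩, hrX⟩
  have hprod : (l ++ y ++ r).prod = (l ++ s ++ r).prod := by simp [hyprod]
  have hylen : y.length = lG X s.prod := hyprod ▸ hy.2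
  have hlong := lG_le_length hyX
  rw [hprod] at hlong
  simp only [List.length_append] at hlong hlsr
  refine ⟨y, by omega, hyprod, geodesic_of_length_le hyX ?_⟩
  rw [hprod, List.length_append, List.length_append]
  omega

namespace LocallyExcluding

variable {k : ℕ}

theorem geodesic_append_of_overlap (hle : LocallyExcluding X k {w | Geodesic X w})
    {p m q : List G} (hpm : Geodesic X (p ++ m)) (hmq : Geodesic X (m ++ q))
    (hm : k - 1 ≤ m.length) : Geodesic X (p ++ m ++ q) := by
  obtain ⟨F, -, hFlen, hF⟩ := hle
  have hX : ∀ x ∈ p ++ m ++ q, x ∈ X :=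
    List.forall_mem_append.mpr ⟨hpm.1, (List.forall_mem_append.mp hmq.1).2⟩
  refine (hF _ hX).mpr fun f hf hfw => ?_
  rcases hfw.infix_left_or_infix_right (by have := hFlen f hf; omega) with h | h
  · exact (hF _ hpm.1).mp hpm f hf h
  · exact (hF _ hmq.1).mp hmq f hf h

theorem exists_geodesic_mul_prefix (hle : LocallyExcluding X k {w | Geodesic X w})
    (hsym : ∀ x ∈ X, x⁻¹ ∈ X) (hgen : Subgroup.closure X = ⊤) {p r : List G}
    (hpr : Geodesic X (p ++ r)) (hp : p.length = k - 1) {a : G} (ha : lG X a ≤ 1)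
    (har : lG X (a * (p ++ r).prod) = (p ++ r).length) :
    ∃ y : List G, y.length = k - 1 ∧ y.prod = a * p.prod ∧ Geodesic X (y ++ r) := by
  obtain ⟨c, hc, rfl⟩ := exists_geodesic_of_closure_eq_top hsym hgen a
  have hcprX : ∀ x ∈ c ++ p ++ r, x ∈ X := by
    rw [List.append_assoc]
    exact List.forall_mem_append.mpr ⟨hc.1, hpr.1⟩
  have hcp : lG X (c ++ p).prod ≤ k - 1 := by
    have hcpX : ∀ x ∈ c ++ p, x ∈ X := fun x hx => hcprX x (List.mem_append_left r hx)
    by_cases hg : Geodesic X (c ++ p)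
    · have hcpr := (hle.geodesic_append_of_overlap hg hpr hp.ge).2
      rw [List.append_assoc, List.prod_append, har] at hcpr
      have hcp_len := hg.2
      simp only [List.length_append] at hcpr hcp_len
      omega
    · have hcp_le := lG_le_length hcpX
      have hne : (c ++ p).length ≠ lG X (c ++ p).prod := fun h => hg ⟨hcpX, h⟩
      have hc_len := hc.2
      simp only [List.length_append] at hcp_le hne
      omega
  have hprod : ([] ++ (c ++ p) ++ r).prod = c.prod * (p ++ r).prod := by simp
  obtain ⟨y, hy, hyprod, hyr⟩ := exists_geodesic_replacement (l := []) (by simpa using hcprX) hcp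
    (by rw [hprod, har, List.length_append, hp]; simp)
  exact ⟨y, hy, by simpa using hyprod, by simpa using hyr⟩

theorem exists_geodesic_suffix_mul (hle : LocallyExcluding X k {w | Geodesic X w})
    (hsym : ∀ x ∈ X, x⁻¹ ∈ X) (hgen : Subgroup.closure X = ⊤) {l q : List G}
    (hlq : Geodesic X (l ++ q)) (hq : q.length = k - 1) {b : G} (hb : lG X b ≤ 1)
    (hlb : lG X ((l ++ q).prod * b) = (l ++ q).length) :
    ∃ z : List G, z.length = k - 1 ∧ z.prod = q.prod * b ∧ Geodesic X (l ++ z) := by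
  obtain ⟨c, hc, rfl⟩ := exists_geodesic_of_closure_eq_top hsym hgen b
  have hlqcX : ∀ x ∈ l ++ q ++ c, x ∈ X := List.forall_mem_append.mpr ⟨hlq.1, hc.1⟩
  have hqc : lG X (q ++ c).prod ≤ k - 1 := by
    have hqcX : ∀ x ∈ q ++ c, x ∈ X := by
      rw [List.append_assoc] at hlqcX
      exact fun x hx => hlqcX x (List.mem_append_right l hx)
    by_cases hg : Geodesic X (q ++ c)
    · have hlqc := (hle.geodesic_append_of_overlap hlq hg hq.ge).2
      rw [List.prod_append, hlb] at hlqc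
      have hqc_len := hg.2
      simp only [List.length_append] at hlqc hqc_len
      omega
    · have hqc_le := lG_le_length hqcX
      have hne : (q ++ c).length ≠ lG X (q ++ c).prod := fun h => hg ⟨hqcX, h⟩
      have hc_len := hc.2
      simp only [List.length_append] at hqc_le hne
      omega
  have hprod : (l ++ (q ++ c) ++ []).prod = (l ++ q).prod * c.prod := by simp [mul_assoc]
  obtain ⟨z, hz, hzprod, hlz⟩ := exists_geodesic_replacement (r := [])
    (by simpa [List.append_assoc] using hlqcX) hqc
    (by rw [hprod, hlb, List.length_append, hq]; simp)
  exact ⟨z, hz, by simpa using hzprod, by simpa using hlz⟩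

end LocallyExcluding

end Words

theorem sandwich_reduction_general {G : Type*} [Group G] (X : Set G)
    (hsym : ∀ x ∈ X, x⁻¹ ∈ X) (hgen : Subgroup.closure X = ⊤)
    (k : ℕ)
    (hle : LocallyExcluding X k {w : List G | Geodesic X w})
    (u' u v' : List G) (w : List G) (hw : w = u' ++ u ++ v')
    (hgeo : Geodesic X w) (hlw : 3 * k - 3 ≤ w.length)
    (hu' : u'.length = k - 1) (hv' : v'.length = k - 1)
    (a b : G) (ha : lG X a ≤ 1) (hb : lG X b ≤ 1)
    (haw : lG X (a * w.prod) = w.length) (hwb : lG X (w.prod * b) = w.length) :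
    (∃ y z : List G, (∀ x ∈ y, x ∈ X) ∧ (∀ x ∈ z, x ∈ X) ∧
        y.length = k - 1 ∧ z.length = k - 1 ∧
        a * w.prod * b = (y ++ u ++ z).prod) ∧
      (lG X (a * w.prod * b) < w.length →
        lG X (a * w.prod) < w.length ∨ lG X (w.prod * b) < w.length) := by
  subst hw
  rw [List.append_assoc] at hgeo haw
  obtain ⟨y, hy, hyprod, hyuv⟩ := hle.exists_geodesic_mul_prefix hsym hgen hgeo hu' ha haw
  rw [← List.append_assoc] at hgeo haw
  obtain ⟨z, hz, hzprod, hu'uz⟩ := hle.exists_geodesic_suffix_mul hsym hgen hgeo hv' hb hwb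
  have hprod : a * (u' ++ u ++ v').prod * b = (y ++ u ++ z).prod := by
    simp only [List.prod_append, hyprod, hzprod, mul_assoc]
  have hyuz : Geodesic X (y ++ u ++ z) :=
    hle.geodesic_append_of_overlap (hyuv.of_infix ⟨[], v', by simp⟩)
      (hu'uz.of_infix ⟨u', [], by simp⟩) (by simp only [List.length_append] at hlw; omega)
  have hyuzX := List.forall_mem_append.mp hyuz.1
  refine ⟨⟨y, z, fun x hx => hyuzX.1 x (List.mem_append_left u hx), hyuzX.2, hy, hz, hprod⟩,
    fun hlt => absurd hlt ?_⟩
  rw [hprod, ← hyuz.2]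
  simp only [List.length_append]
  omega

/-- The key length-bound argument of Lemmas 2.3 and 2.4: if the geodesics of `G` over a
finite symmetric generating set `X` are `k`-locally excluding, `w = u'uv'` is geodesic
with `l(u') = l(v') = k-1` and `l(w) ≥ 3k-3`, and `a, b ∈ G` have word length at most
`1` with `l_G(aw) = l_G(wb) = l(w)`, then `awb =_G yuz` for some words `y, z` over `X`
of length `k-1`; consequently if `l_G(awb) < l(w)` then `l_G(aw) < l(w)` or
`l_G(wb) < l(w)`. -/
theorem sandwich_reduction {G : Type*} [Group G] (X : Set G)
    (hfin : X.Finite) (hsym : ∀ x ∈ X, x⁻¹ ∈ X) (hgen : Subgroup.closure X = ⊤)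
    (k : ℕ) (hk : 0 < k)
    (hle : LocallyExcluding X k {w : List G | Geodesic X w})
    (u' u v' : List G) (w : List G) (hw : w = u' ++ u ++ v')
    (hgeo : Geodesic X w) (hlw : 3 * k - 3 ≤ w.length)
    (hu' : u'.length = k - 1) (hv' : v'.length = k - 1)
    (a b : G) (ha : lG X a ≤ 1) (hb : lG X b ≤ 1)
    (haw : lG X (a * w.prod) = w.length) (hwb : lG X (w.prod * b) = w.length) :
    (∃ y z : List G, (∀ x ∈ y, x ∈ X) ∧ (∀ x ∈ z, x ∈ X) ∧
        y.length = k - 1 ∧ z.length = k - 1 ∧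
        a * w.prod * b = (y ++ u ++ z).prod) ∧
      (lG X (a * w.prod * b) < w.length →
        lG X (a * w.prod) < w.length ∨ lG X (w.prod * b) < w.length) :=
  sandwich_reduction_general X hsym hgen k hle u' u v' w hw hgeo hlw hu' hv' a b ha hb haw hwb
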